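/- Let n and m be positive integers, A an n×n real matrix, B an n×m real matrix, and Q, R symmetric positive-definite matrices. Suppose the symmetric positive-definite matrix P solves the continuous-time algebraic Riccati equation Aᵀ P + P A − P B R⁻¹ Bᵀ P + Q = 0, set K = R⁻¹ Bᵀ P, and let M(τ) = exp(A τ) − (∫₀^τ exp(A s) ds)·B·K. Fix constants 0 < c ≤ c'. Then there exists τ⁺ > 0, independent of x, such that for every x ∈ ℝⁿ with c ≤ xᵀ P x ≤ c' and every τ ∈ (0, τ⁺), one has (M(τ)·x)ᵀ P (M(τ)·x) < xᵀ P x. -/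

import Mathlib

open Matrix MeasureTheory

/-- The ZOH closed-loop transition matrix
`M(τ) = exp(A τ) − (∫₀^τ exp(A s) ds) · B · K`, with entrywise Bochner integral. -/
noncomputable def zohMatrix {n m : ℕ} (A : Matrix (Fin n) (Fin n) ℝ)
    (B : Matrix (Fin n) (Fin m) ℝ) (K : Matrix (Fin m) (Fin n) ℝ) (τ : ℝ) :
    Matrix (Fin n) (Fin n) ℝ :=
  NormedSpace.exp (τ • A) -
    (Matrix.of fun i j => ∫ s in (0:ℝ)..τ, (NormedSpace.exp (s • A)) i j) * B * K

/-!
Put `G(τ) = M(τ)ᵀ P M(τ)`. Then `G(0) = P`, and the CARE turns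
`G'(0) = (A - BK)ᵀ P + P (A - BK)` into `-(Q + (PB) R⁻¹ (PB)ᵀ)`, a negative definite matrix.
Negative definiteness is an open condition on matrices (it only has to be tested on the compact
unit sphere), so the difference quotients `(G(τ) - P) / τ` are negative definite for all small
`τ > 0`, which gives `xᵀ G(τ) x < xᵀ P x` for every `x ≠ 0` at once.
-/

open Filter Topology

section Derivatives

variable {𝕜 : Type*} [NontriviallyNormedField 𝕜] {m n : Type*} [Fintype m] [Fintype n]

/- Matrices carry no global norm, and `HasDerivAt` for them only uses their (product) topology;
the norms installed locally in the proofs below just give access to the normed calculus lemmas. -/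

theorem Matrix.hasDerivAt_of_entries {f : 𝕜 → Matrix m n 𝕜} {f' : Matrix m n 𝕜} {t : 𝕜}
    (h : ∀ i j, HasDerivAt (fun s => f s i j) (f' i j) t) : HasDerivAt f f' t := by
  let := Matrix.normedAddCommGroup (m := m) (n := n) (α := 𝕜)
  let := Matrix.normedSpace (m := m) (n := n) (α := 𝕜) (R := 𝕜)
  exact hasDerivAt_pi.2 fun i => hasDerivAt_pi.2 (h i)

theorem HasDerivAt.matrix_transpose {f : 𝕜 → Matrix m n 𝕜} {f' : Matrix m n 𝕜} {t : 𝕜}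
    (h : HasDerivAt f f' t) : HasDerivAt (fun s => (f s)ᵀ) f'ᵀ t :=
  Matrix.hasDerivAt_of_entries fun i j => by
    let := Matrix.normedAddCommGroup (m := m) (n := n) (α := 𝕜)
    let := Matrix.normedSpace (m := m) (n := n) (α := 𝕜) (R := 𝕜)
    exact hasDerivAt_pi.1 (hasDerivAt_pi.1 h j) i

theorem HasDerivAt.matrix_transpose_mul_mul_self [DecidableEq n] {f : 𝕜 → Matrix n n 𝕜}
    {f' : Matrix n n 𝕜} {t : 𝕜} (h : HasDerivAt f f' t) (P : Matrix n n 𝕜) :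
    HasDerivAt (fun s => (f s)ᵀ * P * f s) (f'ᵀ * P * f t + (f t)ᵀ * P * f') t := by
  let := Matrix.linftyOpNormedRing (n := n) (α := 𝕜)
  let := Matrix.linftyOpNormedAlgebra (R := 𝕜) (n := n) (α := 𝕜)
  exact (h.matrix_transpose.mul_const P).mul h

end Derivatives

theorem dotProduct_mulVec_mulVec_self {α ι : Type*} [CommSemiring α] [Fintype ι]
    (M P : Matrix ι ι α) (x : ι → α) :
    (M *ᵥ x) ⬝ᵥ P *ᵥ (M *ᵥ x) = x ⬝ᵥ (Mᵀ * P * M) *ᵥ x := by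
  rw [Matrix.mul_assoc, ← mulVec_mulVec, dotProduct_mulVec x, vecMul_transpose, mulVec_mulVec]

section NegativeDefinite

variable {ι : Type*} [Fintype ι]

theorem eventually_forall_dotProduct_mulVec_neg {N : Matrix ι ι ℝ}
    (hN : ∀ x ≠ 0, x ⬝ᵥ N *ᵥ x < 0) : ∀ᶠ N' in 𝓝 N, ∀ x ≠ 0, x ⬝ᵥ N' *ᵥ x < 0 := by
  have hcont : Continuous fun p : Matrix ι ι ℝ × (ι → ℝ) => p.2 ⬝ᵥ p.1 *ᵥ p.2 :=
    continuous_snd.dotProduct (continuous_fst.matrix_mulVec continuous_snd)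
  have hsphere : ∀ᶠ N' in 𝓝 N, ∀ y ∈ Metric.sphere (0 : ι → ℝ) 1, y ⬝ᵥ N' *ᵥ y < 0 :=
    (isCompact_sphere 0 1).eventually_forall_of_forall_eventually fun y hy =>
      (isOpen_lt hcont continuous_const).mem_nhds (hN y (ne_zero_of_mem_unit_sphere ⟨y, hy⟩))
  refine hsphere.mono fun N' hN' x hx => ?_
  have hnorm : 0 < ‖x‖ := norm_pos_iff.2 hx
  have hunit : ‖x‖⁻¹ • x ∈ Metric.sphere (0 : ι → ℝ) 1 := by simp [norm_smul, hnorm.ne']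
  have hneg := hN' _ hunit
  rw [mulVec_smul, dotProduct_smul, smul_dotProduct, smul_eq_mul, smul_eq_mul] at hneg
  have hinv := inv_nonneg.2 hnorm.le
  exact neg_of_mul_neg_right (neg_of_mul_neg_right hneg hinv) hinv

theorem exists_forall_dotProduct_mulVec_lt_of_hasDerivAt {f : ℝ → Matrix ι ι ℝ}
    {N : Matrix ι ι ℝ} {t : ℝ} (hf : HasDerivAt f N t) (hN : ∀ x ≠ 0, x ⬝ᵥ N *ᵥ x < 0) :
    ∃ δ > 0, ∀ τ, t < τ → τ < t + δ → ∀ x ≠ 0, x ⬝ᵥ f τ *ᵥ x < x ⬝ᵥ f t *ᵥ x := by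
  let := Matrix.normedAddCommGroup (m := ι) (n := ι) (α := ℝ)
  let := Matrix.normedSpace (m := ι) (n := ι) (α := ℝ) (R := ℝ)
  have hslope : ∀ᶠ τ in 𝓝[>] t, ∀ x ≠ 0, x ⬝ᵥ slope f t τ *ᵥ x < 0 :=
    nhdsGT_le_nhdsNE t (hf.tendsto_slope (eventually_forall_dotProduct_mulVec_neg hN))
  obtain ⟨u, htu, hIoo⟩ := mem_nhdsGT_iff_exists_Ioo_subset.1 hslope
  refine ⟨u - t, sub_pos.2 htu, fun τ htτ hτu x hx => ?_⟩
  have hneg := hIoo ⟨htτ, by linarith⟩ x hx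
  rw [slope_def_module, smul_mulVec, dotProduct_smul, smul_eq_mul, sub_mulVec,
    dotProduct_sub] at hneg
  linarith [neg_of_mul_neg_right hneg (inv_nonneg.2 (sub_pos.2 htτ).le)]

theorem Matrix.PosDef.add_mul_inv_mul_transpose {κ : Type*} [Fintype κ] [DecidableEq κ]
    {Q : Matrix ι ι ℝ} {R : Matrix κ κ ℝ} (hQ : Q.PosDef) (hR : R.PosDef) (G : Matrix ι κ ℝ) :
    (Q + G * R⁻¹ * Gᵀ).PosDef :=
  hQ.add_posSemidef (hR.inv.posSemidef.mul_mul_conjTranspose_same G)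

end NegativeDefinite

theorem care_closedLoop_lyapunov {𝕜 : Type*} [CommRing 𝕜] {ι κ : Type*} [Fintype ι]
    [Fintype κ] [DecidableEq κ] {A P Q : Matrix ι ι 𝕜} {B : Matrix ι κ 𝕜} {R : Matrix κ κ 𝕜}
    {K : Matrix κ ι 𝕜} (hP : P.IsSymm) (hR : R.IsSymm)
    (hCARE : Aᵀ * P + P * A - P * B * R⁻¹ * Bᵀ * P + Q = 0) (hK : K = R⁻¹ * Bᵀ * P) :
    (A - B * K)ᵀ * P + P * (A - B * K) = -(Q + (P * B) * R⁻¹ * (P * B)ᵀ) := by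
  have hKt : Kᵀ = P * B * R⁻¹ := by
    rw [hK, transpose_mul, transpose_mul, transpose_transpose, hP.eq, transpose_nonsing_inv,
      hR.eq, Matrix.mul_assoc]
  refine eq_neg_of_add_eq_zero_left ?_
  rw [← hCARE, transpose_sub, transpose_mul, hKt, transpose_mul, hP.eq, hK]
  simp only [Matrix.sub_mul, Matrix.mul_sub, Matrix.mul_assoc]
  abel

theorem zohMatrix_zero {n m : ℕ} (A : Matrix (Fin n) (Fin n) ℝ) (B : Matrix (Fin n) (Fin m) ℝ)
    (K : Matrix (Fin m) (Fin n) ℝ) : zohMatrix A B K 0 = 1 := by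
  have hzero : (of fun _ _ => (0 : ℝ) : Matrix (Fin n) (Fin n) ℝ) = 0 := rfl
  simp [zohMatrix, hzero]

open NormedSpace in
theorem hasDerivAt_zohMatrix_zero {n m : ℕ} (A : Matrix (Fin n) (Fin n) ℝ)
    (B : Matrix (Fin n) (Fin m) ℝ) (K : Matrix (Fin m) (Fin n) ℝ) :
    HasDerivAt (zohMatrix A B K) (A - B * K) 0 := by
  let := Matrix.linftyOpNormedRing (n := Fin n) (α := ℝ)
  let := Matrix.linftyOpNormedAlgebra (R := ℝ) (n := Fin n) (α := ℝ)
  have hexp : HasDerivAt (fun τ : ℝ => exp (τ • A)) A 0 := by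
    have := hasDerivAt_exp_smul_const (𝕂 := ℝ) A 0
    rwa [zero_smul, exp_zero, one_mul] at this
  have hcont : Continuous fun s : ℝ => exp (s • A) :=
    (differentiable_exp_smul_const ℝ A).continuous
  have hint : HasDerivAt (fun τ => of fun i j => ∫ s in (0:ℝ)..τ, exp (s • A) i j) 1 0 :=
    Matrix.hasDerivAt_of_entries fun i j => by
      simpa using ((hcont.matrix_elem i j).integral_hasStrictDerivAt 0 0).hasDerivAt
  have hzoh : zohMatrix A B K = (fun τ => exp (τ • A)) -
      fun τ => (of fun i j => ∫ s in (0:ℝ)..τ, exp (s • A) i j) * (B * K) := by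
    funext τ
    simp [zohMatrix, Matrix.mul_assoc]
  have := hexp.sub (hint.mul_const (B * K))
  rwa [one_mul, ← hzoh] at this

theorem exists_uniform_admissible_interval_general
    (n m : ℕ)
    (A : Matrix (Fin n) (Fin n) ℝ) (B : Matrix (Fin n) (Fin m) ℝ)
    (Q P : Matrix (Fin n) (Fin n) ℝ) (R : Matrix (Fin m) (Fin m) ℝ)
    (hQ : Q.PosDef) (hR : R.PosDef) (hP : P.PosDef)
    (hCARE : Aᵀ * P + P * A - P * B * R⁻¹ * Bᵀ * P + Q = 0)
    (K : Matrix (Fin m) (Fin n) ℝ) (hK : K = R⁻¹ * Bᵀ * P)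
    (c c' : ℝ) (hc : 0 < c) :
    ∃ τplus : ℝ, 0 < τplus ∧
      ∀ x : Fin n → ℝ, c ≤ x ⬝ᵥ P *ᵥ x → x ⬝ᵥ P *ᵥ x ≤ c' →
        ∀ τ : ℝ, 0 < τ → τ < τplus →
          (zohMatrix A B K τ *ᵥ x) ⬝ᵥ P *ᵥ (zohMatrix A B K τ *ᵥ x) < x ⬝ᵥ P *ᵥ x := by
  have hlyap := care_closedLoop_lyapunov (isHermitian_iff_isSymm.1 hP.isHermitian)
    (isHermitian_iff_isSymm.1 hR.isHermitian) hCARE hK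
  have hderiv : HasDerivAt (fun τ => (zohMatrix A B K τ)ᵀ * P * zohMatrix A B K τ)
      (-(Q + (P * B) * R⁻¹ * (P * B)ᵀ)) 0 := by
    have := (hasDerivAt_zohMatrix_zero A B K).matrix_transpose_mul_mul_self P
    rwa [zohMatrix_zero, transpose_one, Matrix.mul_one, Matrix.one_mul, hlyap] at this
  have hneg : ∀ x ≠ 0, x ⬝ᵥ (-(Q + (P * B) * R⁻¹ * (P * B)ᵀ)) *ᵥ x < 0 := fun x hx => by
    rw [neg_mulVec, dotProduct_neg, neg_lt_zero]
    exact (hQ.add_mul_inv_mul_transpose hR (P * B)).dotProduct_mulVec_pos hx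
  obtain ⟨δ, hδ, hdecrease⟩ := exists_forall_dotProduct_mulVec_lt_of_hasDerivAt hderiv hneg
  refine ⟨δ, hδ, fun x hcx _ τ hτ hτδ => ?_⟩
  have hx : x ≠ 0 := by
    rintro rfl
    simp only [zero_dotProduct] at hcx
    linarith
  have hlt := hdecrease τ hτ (by rwa [zero_add]) x hx
  simp only [zohMatrix_zero, transpose_one, Matrix.one_mul, Matrix.mul_one] at hlt
  rwa [dotProduct_mulVec_mulVec_self]

/-- Under the CARE with `K = R⁻¹ Bᵀ P`, for fixed `0 < c ≤ c'` there exists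
a uniform `τ⁺ > 0` such that for every `x` with `c ≤ xᵀ P x ≤ c'` and every `τ ∈ (0, τ⁺)`,
`(M(τ)x)ᵀ P (M(τ)x) < xᵀ P x`. -/
theorem exists_uniform_admissible_interval
    (n m : ℕ) (hn : 0 < n) (hm : 0 < m)
    (A : Matrix (Fin n) (Fin n) ℝ) (B : Matrix (Fin n) (Fin m) ℝ)
    (Q P : Matrix (Fin n) (Fin n) ℝ) (R : Matrix (Fin m) (Fin m) ℝ)
    (hQ : Q.PosDef) (hR : R.PosDef) (hP : P.PosDef)
    (hCARE : Aᵀ * P + P * A - P * B * R⁻¹ * Bᵀ * P + Q = 0)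
    (K : Matrix (Fin m) (Fin n) ℝ) (hK : K = R⁻¹ * Bᵀ * P)
    (c c' : ℝ) (hc : 0 < c) (hcc' : c ≤ c') :
    ∃ τplus : ℝ, 0 < τplus ∧
      ∀ x : Fin n → ℝ, c ≤ x ⬝ᵥ P *ᵥ x → x ⬝ᵥ P *ᵥ x ≤ c' →
        ∀ τ : ℝ, 0 < τ → τ < τplus →
          (zohMatrix A B K τ *ᵥ x) ⬝ᵥ P *ᵥ (zohMatrix A B K τ *ᵥ x) < x ⬝ᵥ P *ᵥ x :=
  exists_uniform_admissible_interval_general n m A B Q P R hQ hR hP hCARE K hK c c' hc
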